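/- Let W = {(W_i, ω_i)}_{i∈I} and W¹ = {(W_i, 1)}_{i∈I}. If W is a fusion frame and W¹ is a fusion frame, then e(W) = e(W¹); i.e., the excess of a fusion frame does not depend on the weights. -/

import Mathlib

noncomputable section
open scoped ENNReal

/-- `W = {(W i, ω i)}` is a fusion frame for `H`. -/
def IsFusionFrame {H : Type} [NormedAddCommGroup H] [InnerProductSpace ℂ H]
    {ι : Type} (W : ι → Submodule ℂ H) [∀ i, Submodule.HasOrthogonalProjection (W i)]
    (ω : ι → ℝ) : Prop :=
  (∀ i, 0 < ω i) ∧ ∃ A B : ℝ, 0 < A ∧ A ≤ B ∧ ∀ f : H,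
    (A * ‖f‖ ^ 2 ≤ ∑' i, ω i ^ 2 * ‖(Submodule.orthogonalProjection (W i) f : H)‖ ^ 2) ∧
    (∑' i, ω i ^ 2 * ‖(Submodule.orthogonalProjection (W i) f : H)‖ ^ 2 ≤ B * ‖f‖ ^ 2)

/-- `W = {(W i, ω i)}` is a fusion Riesz basis for `H`. -/
def IsFusionRieszBasis {H : Type} [NormedAddCommGroup H] [InnerProductSpace ℂ H]
    {ι : Type} (W : ι → Submodule ℂ H) (ω : ι → ℝ) : Prop :=
  (∀ i, 0 < ω i) ∧ (⨆ i, W i).topologicalClosure = ⊤ ∧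
  ∃ C D : ℝ, 0 < C ∧ C ≤ D ∧ ∀ (s : Finset ι) (f : ∀ i, W i),
    (C * ∑ j ∈ s, ‖(f j : H)‖ ^ 2 ≤ ‖∑ j ∈ s, ω j • (f j : H)‖ ^ 2) ∧
    (‖∑ j ∈ s, ω j • (f j : H)‖ ^ 2 ≤ D * ∑ j ∈ s, ‖(f j : H)‖ ^ 2)

/-!
Let `D` be the diagonal operator on `ℓ²(⊕ Wᵢ)` multiplying the `i`-th coordinate by `ωᵢ > 0`.
Then `T = T¹ ∘ D`, and `D` is injective and self-adjoint, so `D` maps `ker T` injectively into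
`ker T¹`. Conversely, the lower frame bound says that `T*` is bounded below, so its range is
closed and `(ker T)ᗮ = range T* = D (range T¹*)`. Hence if `x ∈ ker T¹` and `D x ⊥ ker T`, then
`x ∈ range T¹* ⊆ (ker T¹)ᗮ`, i.e. `x = 0`: the map `x ↦ P_{ker T} (D x)` embeds `ker T¹` into
`ker T`.
-/

open scoped InnerProduct ComplexConjugate

theorem LinearMap.rank_ker_comp_le_of_injective {R M N : Type*} [Ring R] [AddCommGroup M]
    [Module R M] [AddCommGroup N] [Module R N] (S : M →ₗ[R] N) {D : M →ₗ[R] M}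
    (hD : Function.Injective D) :
    Module.rank R (S ∘ₗ D).ker ≤ Module.rank R S.ker :=
  LinearMap.rank_le_of_injective (D.restrict fun _ hx => hx) fun _ _ hxy =>
    Subtype.ext (hD (congrArg Subtype.val hxy))

theorem ContinuousLinearMap.isClosed_range_of_sq_le {𝕜 E F : Type*} [NontriviallyNormedField 𝕜]
    [NormedAddCommGroup E] [NormedSpace 𝕜 E] [CompleteSpace E] [NormedAddCommGroup F]
    [NormedSpace 𝕜 F] (f : E →L[𝕜] F) {A : ℝ} (hA : 0 < A) (h : ∀ x, A * ‖x‖ ^ 2 ≤ ‖f x‖ ^ 2) :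
    IsClosed (Set.range f) := by
  have hbound : ∀ x, ‖x‖ ≤ (√A)⁻¹ * ‖f x‖ := fun x => by
    rw [inv_mul_eq_div, le_div_iff₀' (Real.sqrt_pos.2 hA)]
    simpa [Real.sqrt_mul hA.le, Real.sqrt_sq (norm_nonneg _)] using Real.sqrt_le_sqrt (h x)
  exact (f.antilipschitz_of_bound (K := ⟨(√A)⁻¹, by positivity⟩) hbound).isClosed_range
    f.uniformContinuous

section Kernel

variable {𝕜 E F : Type*} [RCLike 𝕜] [NormedAddCommGroup E] [InnerProductSpace 𝕜 E]
  [CompleteSpace E] [NormedAddCommGroup F] [InnerProductSpace 𝕜 F] [CompleteSpace F]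

theorem ContinuousLinearMap.orthogonal_ker_eq_range_adjoint (T : E →L[𝕜] F)
    (hT : IsClosed (Set.range (T†))) : T.kerᗮ = (T†).range := by
  rw [T.orthogonal_ker]
  exact IsClosed.submodule_topologicalClosure_eq (by rwa [LinearMap.coe_range, coe_coe])

theorem ContinuousLinearMap.rank_ker_le_rank_ker_comp (S : E →L[𝕜] F) {D : E →L[𝕜] E}
    (hD : IsSelfAdjoint D) (hDinj : Function.Injective D)
    (hclosed : IsClosed (Set.range ((S ∘L D)†))) :
    Module.rank 𝕜 S.ker ≤ Module.rank 𝕜 (S ∘L D).ker := by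
  set K := (S ∘L D).ker
  have : CompleteSpace K := (S ∘L D).isClosed_ker.completeSpace_coe
  refine LinearMap.rank_le_of_injective
    (K.orthogonalProjectionOnto.toLinearMap ∘ₗ (D : E →ₗ[𝕜] E).domRestrict S.ker) ?_
  rw [← LinearMap.ker_eq_bot, eq_bot_iff]
  rintro ⟨x, hxS⟩ hx
  have hDx : D x ∈ Kᗮ := Submodule.orthogonalProjectionOnto_eq_zero_iff.1 hx
  rw [(S ∘L D).orthogonal_ker_eq_range_adjoint hclosed, adjoint_comp, hD.adjoint_eq] at hDx
  obtain ⟨f, hf⟩ := hDx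
  have hx_adj : (S†) f = x := hDinj hf
  have hx_orth : x ∈ S.kerᗮ := by
    rw [S.orthogonal_ker, ← hx_adj]
    exact Submodule.le_topologicalClosure _ ⟨f, rfl⟩
  have : x = 0 := S.ker.orthogonal_disjoint.le_bot ⟨hxS, hx_orth⟩
  simp [this]

theorem ContinuousLinearMap.rank_ker_comp_eq_of_isSelfAdjoint (S : E →L[𝕜] F) {D : E →L[𝕜] E}
    (hD : IsSelfAdjoint D) (hDinj : Function.Injective D)
    (hclosed : IsClosed (Set.range ((S ∘L D)†))) :
    Module.rank 𝕜 (S ∘L D).ker = Module.rank 𝕜 S.ker :=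
  le_antisymm ((S : E →ₗ[𝕜] F).rank_ker_comp_le_of_injective hDinj)
    (S.rank_ker_le_rank_ker_comp hD hDinj hclosed)

end Kernel

namespace lp

section Diagonal

variable {𝕜 ι : Type*} [RCLike 𝕜] {E : ι → Type*} [∀ i, NormedAddCommGroup (E i)]
  [∀ i, NormedSpace 𝕜 (E i)] {p : ℝ≥0∞} {c : ι → 𝕜} {C : ℝ}

theorem memℓp_smul_of_norm_smul_le (hc : ∀ i (x : E i), ‖c i • x‖ ≤ C * ‖x‖) (g : lp E p) :
    Memℓp (fun i => c i • g i) p :=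
  ((lp.memℓp g).norm.const_mul C).mono fun i => hc i (g i)

variable [Fact (1 ≤ p)]

variable (c C) in
-- The bound is asked per vector so that `c i` is unconstrained on zero summands.
def diagonal (hc : ∀ i (x : E i), ‖c i • x‖ ≤ C * ‖x‖) : lp E p →L[𝕜] lp E p :=
  LinearMap.mkContinuous
    { toFun g := ⟨fun i => c i • g i, memℓp_smul_of_norm_smul_le hc g⟩
      map_add' g h := lp.ext <| funext fun i => smul_add (c i) (g i) (h i)
      map_smul' a g := lp.ext <| funext fun i => smul_comm (c i) a (g i) }
    |C| fun g => by
      calc ‖(⟨fun i => c i • g i, memℓp_smul_of_norm_smul_le hc g⟩ : lp E p)‖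
          ≤ ‖(C : 𝕜) • g‖ :=
            lp.norm_mono (zero_lt_one.trans_le Fact.out).ne' fun i => by
              simpa [norm_smul] using (hc i (g i)).trans
                (mul_le_mul_of_nonneg_right (le_abs_self C) (norm_nonneg _))
        _ = |C| * ‖g‖ := by
            rw [lp.norm_const_smul (zero_lt_one.trans_le Fact.out).ne', RCLike.norm_ofReal]

@[simp]
theorem diagonal_apply (hc : ∀ i (x : E i), ‖c i • x‖ ≤ C * ‖x‖) (g : lp E p) (i : ι) :
    diagonal c C hc g i = c i • g i :=
  rfl

theorem diagonal_injective (hc : ∀ i (x : E i), ‖c i • x‖ ≤ C * ‖x‖) (hc0 : ∀ i, c i ≠ 0) :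
    Function.Injective (diagonal c C hc (p := p)) :=
  fun _ _ hgh => lp.ext <| funext fun i =>
    smul_right_injective (E i) (hc0 i) (congrFun (congrArg (⇑) hgh) i)

end Diagonal

theorem norm_sq_eq_tsum {ι : Type*} {E : ι → Type*} [∀ i, NormedAddCommGroup (E i)]
    (g : lp E 2) : ‖g‖ ^ 2 = ∑' i, ‖g i‖ ^ 2 := by
  simpa [Real.rpow_two] using lp.norm_rpow_eq_tsum (p := 2) (by norm_num) g

section Hilbert

variable {𝕜 ι : Type*} [RCLike 𝕜] {E : ι → Type*} [∀ i, NormedAddCommGroup (E i)]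
  [∀ i, InnerProductSpace 𝕜 (E i)] [∀ i, CompleteSpace (E i)]

theorem isSelfAdjoint_diagonal {c : ι → 𝕜} {C : ℝ} (hc : ∀ i (x : E i), ‖c i • x‖ ≤ C * ‖x‖)
    (hconj : ∀ i, conj (c i) = c i) : IsSelfAdjoint (diagonal c C hc (p := 2)) :=
  ContinuousLinearMap.isSelfAdjoint_iff_isSymmetric.2 fun _ _ => by
    simp [lp.inner_eq_tsum, inner_smul_left, inner_smul_right, hconj]

theorem adjoint_apply_apply [DecidableEq ι] {F : Type*} [NormedAddCommGroup F]
    [InnerProductSpace 𝕜 F] [CompleteSpace F] (T : lp E 2 →L[𝕜] F) (f : F) (i : ι) :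
    (T†) f i = ((T ∘L singleContinuousLinearMap 𝕜 E 2 i)†) f := by
  refine ext_inner_left 𝕜 fun x => ?_
  rw [ContinuousLinearMap.adjoint_inner_right, ContinuousLinearMap.comp_apply,
    singleContinuousLinearMap_apply, ← ContinuousLinearMap.adjoint_inner_right,
    inner_single_left]

end Hilbert

end lp

section FusionFrame

variable {H : Type} [NormedAddCommGroup H] [InnerProductSpace ℂ H] {ι : Type}
  {W : ι → Submodule ℂ H} {ω : ι → ℝ}
  {T : lp (fun i => W i) 2 →L[ℂ] H}

variable (W ω) in
def IsSynthesisOperator (T : lp (fun i => W i) 2 →L[ℂ] H) : Prop :=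
  ∀ g : lp (fun i => W i) 2, T g = ∑' i, ω i • (g i : H)

namespace IsSynthesisOperator

theorem apply_single [DecidableEq ι] (hT : IsSynthesisOperator W ω T) (i : ι) (x : W i) :
    T (lp.single 2 i x) = ω i • (x : H) := by
  rw [hT, tsum_eq_single i fun j hj => by simp [Pi.single_eq_of_ne hj],
    lp.single_apply_self]

theorem comp_single [DecidableEq ι] (hT : IsSynthesisOperator W ω T) (i : ι) :
    T ∘L lp.singleContinuousLinearMap ℂ (fun i => W i) 2 i = (ω i : ℂ) • (W i).subtypeL := by
  ext x
  simp [hT.apply_single, Complex.coe_smul]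

theorem norm_smul_le (hT : IsSynthesisOperator W ω T) (i : ι) (x : W i) :
    ‖(ω i : ℂ) • x‖ ≤ ‖T‖ * ‖x‖ := by
  classical
  calc ‖(ω i : ℂ) • x‖ = ‖T (lp.single 2 i x)‖ := by
        rw [hT.apply_single, ← Complex.coe_smul]; rfl
    _ ≤ ‖T‖ * ‖x‖ := by
        simpa [lp.norm_single] using T.le_opNorm (lp.single 2 i x)

variable [CompleteSpace H] [∀ i, CompleteSpace (W i)]

theorem adjoint_apply (hT : IsSynthesisOperator W ω T) (f : H) (i : ι) :
    (T†) f i = (ω i : ℂ) • (W i).orthogonalProjectionOnto f := by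
  classical
  rw [lp.adjoint_apply_apply, hT.comp_single, map_smulₛₗ, Submodule.adjoint_subtypeL,
    Complex.conj_ofReal]
  rfl

theorem norm_adjoint_apply_sq (hT : IsSynthesisOperator W ω T) (f : H) :
    ‖(T†) f‖ ^ 2 = ∑' i, ω i ^ 2 * ‖((W i).orthogonalProjectionOnto f : H)‖ ^ 2 := by
  rw [lp.norm_sq_eq_tsum]
  refine tsum_congr fun i => ?_
  rw [hT.adjoint_apply, norm_smul, mul_pow, Complex.norm_real, Real.norm_eq_abs, sq_abs]
  rfl

end IsSynthesisOperator

end FusionFrame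

theorem excess_independent_of_weights_general
    {H : Type} [NormedAddCommGroup H] [InnerProductSpace ℂ H] [CompleteSpace H]
    {ι : Type} (W : ι → Submodule ℂ H) [∀ i, CompleteSpace (W i)] (ω : ι → ℝ)
    (hW : IsFusionFrame W ω)
    -- synthesis operator of `W = {(W i, ω i)}`:
    (T : lp (fun i => ↥(W i)) 2 →L[ℂ] H)
    (hT : ∀ g : lp (fun i => ↥(W i)) 2, T g = ∑' i, ω i • ((g i : H)))
    -- synthesis operator of `W¹ = {(W i, 1)}`:
    (T1 : lp (fun i => ↥(W i)) 2 →L[ℂ] H)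
    (hT1 : ∀ g : lp (fun i => ↥(W i)) 2, T1 g = ∑' i, ((g i : H))) :
    Module.rank ℂ (LinearMap.ker (T : lp (fun i => ↥(W i)) 2 →ₗ[ℂ] H)) =
      Module.rank ℂ (LinearMap.ker (T1 : lp (fun i => ↥(W i)) 2 →ₗ[ℂ] H)) := by
  obtain ⟨hω, A, B, hA, -, hframe⟩ := hW
  have hsynth : IsSynthesisOperator W ω T := hT
  set D := lp.diagonal (p := 2) (fun i => (ω i : ℂ)) ‖T‖ hsynth.norm_smul_le
  have hTD : T = T1 ∘L D := by
    ext g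
    simp [hT, hT1, D, Complex.coe_smul]
  have hclosed : IsClosed (Set.range ((T1 ∘L D)†)) := by
    refine hTD ▸ (T†).isClosed_range_of_sq_le hA fun f => ?_
    rw [hsynth.norm_adjoint_apply_sq]
    exact (hframe f).1
  rw [hTD]
  exact T1.rank_ker_comp_eq_of_isSelfAdjoint
    (lp.isSelfAdjoint_diagonal _ fun i => Complex.conj_ofReal (ω i))
    (lp.diagonal_injective _ fun i => Complex.ofReal_ne_zero.2 (hω i).ne')
    hclosed

/-- the excess of a fusion frame does not depend on the weights. -/
theorem excess_independent_of_weights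
    {H : Type} [NormedAddCommGroup H] [InnerProductSpace ℂ H] [CompleteSpace H]
    {ι : Type} (W : ι → Submodule ℂ H) [∀ i, CompleteSpace (W i)] (ω : ι → ℝ)
    (hW : IsFusionFrame W ω)
    (hW1 : IsFusionFrame W (fun _ => (1 : ℝ)))
    -- synthesis operator of `W = {(W i, ω i)}`:
    (T : lp (fun i => ↥(W i)) 2 →L[ℂ] H)
    (hT : ∀ g : lp (fun i => ↥(W i)) 2, T g = ∑' i, ω i • ((g i : H)))
    -- synthesis operator of `W¹ = {(W i, 1)}`:
    (T1 : lp (fun i => ↥(W i)) 2 →L[ℂ] H)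
    (hT1 : ∀ g : lp (fun i => ↥(W i)) 2, T1 g = ∑' i, ((g i : H))) :
    Module.rank ℂ (LinearMap.ker (T : lp (fun i => ↥(W i)) 2 →ₗ[ℂ] H)) =
      Module.rank ℂ (LinearMap.ker (T1 : lp (fun i => ↥(W i)) 2 →ₗ[ℂ] H)) :=
  excess_independent_of_weights_general W ω hW T hT T1 hT1
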